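/- Let c > 0. For all integers m, n ≥ 1, the parametric Legendre rational functions satisfy the orthogonality relation ∫₀¹ R_m(c; x) R_n(c; x) dx = δ_{mn}/((1+c)(2n−1)). -/

import Mathlib

open Polynomial MeasureTheory Real Filter

/-- The Legendre polynomial of degree `n`, via the Rodrigues formula
`P_n(x) = 1/(2^n n!) dⁿ/dxⁿ (x² - 1)ⁿ`. -/
noncomputable def legendre (n : ℕ) : Polynomial ℝ :=
  (1 / (2 ^ n * n.factorial) : ℝ) • derivative^[n] ((X ^ 2 - 1) ^ n)

/-- The shifted Legendre polynomial `P̃_n(x) = P_n(2x - 1)` on `[0,1]`. -/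
noncomputable def shiftedLegendre (n : ℕ) (x : ℝ) : ℝ :=
  (legendre n).eval (2 * x - 1)

/-- The parametric altered Legendre polynomial
`A_n(c; x) = (c/(c+1)) (x + 1/c) P̃_{n-1}(x)`. -/
noncomputable def alteredLegendreC (c : ℝ) (n : ℕ) (x : ℝ) : ℝ :=
  (c / (c + 1)) * (x + 1 / c) * shiftedLegendre (n - 1) x

/-- The parametric Legendre rational function
`R_n(c; x) = (-1)^{n-1} A_n(c; (1-x)/(1+cx))`. -/
noncomputable def legendreRationalC (c : ℝ) (n : ℕ) (x : ℝ) : ℝ :=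
  (-1) ^ (n - 1) * alteredLegendreC c n ((1 - x) / (1 + c * x))

/-!
Put `u = (1 - x) / (1 + c x)`. Then `(c / (c + 1)) (u + 1 / c) = 1 / (1 + c x)` and
`du = -(1 + c) dx / (1 + c x)²`, so `∫₀¹ R_m R_n dx = ± (1 / (1 + c)) ∫₀¹ P̃_{m-1} P̃_{n-1} du`,
and the claim reduces to the orthogonality of the shifted Legendre polynomials, i.e. of `P_n`
on `[-1, 1]`. The latter comes from the Rodrigues formula by `n` integrations by parts, all boundary terms
vanishing because `±1` are roots of order `n` of `(X² - 1)ⁿ`; for the norm one further needs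
`∫₋₁¹ (1 - x²)ⁿ dx = 2^(2n+1) n!² / (2n+1)!`.
-/

open intervalIntegral

namespace Polynomial

variable {R : Type*}

theorem iterate_derivative_natDegree [Semiring R] (p : R[X]) :
    derivative^[p.natDegree] p = C (p.natDegree.factorial * p.leadingCoeff) := by
  rw [← factorial_smul_hasseDeriv, LinearMap.smul_apply, hasseDeriv_natDegree_eq_C, nsmul_eq_mul,
    ← C_eq_natCast, ← C_mul]

theorem eval_iterate_derivative_pow_eq_zero [CommRing R] {p : R[X]} {x : R} (hx : p.IsRoot x)
    {n k : ℕ} (hk : k < n) : (derivative^[k] (p ^ n)).eval x = 0 := by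
  obtain ⟨q, hq⟩ := pow_sub_dvd_iterate_derivative_pow p n k
  rw [hq, eval_mul, eval_pow, hx.eq_zero, zero_pow (by omega), zero_mul]

theorem monic_X_sq_sub_one [Ring R] : (X ^ 2 - 1 : R[X]).Monic := by
  simpa using monic_X_pow_sub_C (1 : R) two_ne_zero

theorem natDegree_X_sq_sub_one_pow [Ring R] [Nontrivial R] (n : ℕ) :
    ((X ^ 2 - 1 : R[X]) ^ n).natDegree = 2 * n := by
  rw [monic_X_sq_sub_one.natDegree_pow, ← C_1, natDegree_X_pow_sub_C, mul_comm]

theorem integral_eval_mul_iterate_derivative {a b : ℝ} (n : ℕ) (p q : ℝ[X])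
    (hq : ∀ k < n, (derivative^[k] q).eval a = 0 ∧ (derivative^[k] q).eval b = 0) :
    ∫ x in a..b, p.eval x * (derivative^[n] q).eval x =
      (-1) ^ n * ∫ x in a..b, (derivative^[n] p).eval x * q.eval x := by
  induction n generalizing q with
  | zero => simp
  | succ n ih =>
    have hq' : ∀ k < n, (derivative^[k] (derivative q)).eval a = 0 ∧
        (derivative^[k] (derivative q)).eval b = 0 := fun k hk ↦ by
      simpa only [← Function.iterate_succ_apply] using hq (k + 1) (by omega)
    obtain ⟨hqa, hqb⟩ := hq 0 n.succ_pos
    have hibp := integral_mul_deriv_eq_deriv_mul (a := a) (b := b)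
      (fun x _ ↦ (derivative^[n] p).hasDerivAt x) (fun x _ ↦ q.hasDerivAt x)
      ((derivative _).continuous.intervalIntegrable _ _)
      ((derivative q).continuous.intervalIntegrable _ _)
    simp only [Function.iterate_zero_apply] at hqa hqb
    rw [Function.iterate_succ_apply, ih _ hq', hibp, hqa, hqb,
      ← Function.iterate_succ_apply' derivative n p]
    ring

end Polynomial

open Polynomial

lemma integral_one_sub_sq_pow_succ (n : ℕ) :
    (2 * n + 3 : ℝ) * ∫ x in (-1:ℝ)..1, (1 - x ^ 2) ^ (n + 1) =
      (2 * n + 2 : ℝ) * ∫ x in (-1:ℝ)..1, (1 - x ^ 2) ^ n := by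
  have hderiv : ∀ x ∈ Set.uIcc (-1:ℝ) 1, HasDerivAt (fun x : ℝ ↦ x * (1 - x ^ 2) ^ (n + 1))
      ((2 * n + 3) * (1 - x ^ 2) ^ (n + 1) - (2 * n + 2) * (1 - x ^ 2) ^ n) x := fun x _ ↦ by
    refine ((hasDerivAt_id' x).mul
      (((hasDerivAt_pow 2 x).const_sub 1).pow (n + 1))).congr_deriv ?_
    simp only [Pi.pow_apply]
    push_cast
    ring
  have hcont : Continuous fun x : ℝ ↦
      (2 * n + 3 : ℝ) * (1 - x ^ 2) ^ (n + 1) - (2 * n + 2) * (1 - x ^ 2) ^ n := by fun_prop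
  have hFTC := integral_eq_sub_of_hasDerivAt hderiv (hcont.intervalIntegrable _ _)
  rw [intervalIntegral.integral_sub, intervalIntegral.integral_const_mul,
    intervalIntegral.integral_const_mul] at hFTC
  · norm_num at hFTC
    linarith
  all_goals exact (by fun_prop : Continuous _).intervalIntegrable _ _

lemma integral_one_sub_sq_pow (n : ℕ) :
    ∫ x in (-1:ℝ)..1, (1 - x ^ 2) ^ n =
      (2 ^ (2 * n + 1) * n.factorial ^ 2 / (2 * n + 1).factorial : ℝ) := by
  induction n with
  | zero => norm_num
  | succ n ih =>
    have h := integral_one_sub_sq_pow_succ n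
    rw [ih] at h
    rw [eq_div_iff (by positivity),
      ← mul_left_cancel_iff_of_pos (by positivity : (0:ℝ) < 2 * n + 3), ← mul_assoc, h]
    simp only [Nat.factorial_succ, show 2 * (n + 1) + 1 = (2 * n + 1) + 1 + 1 by ring]
    field_simp
    push_cast
    ring

lemma natDegree_legendre_le (n : ℕ) : (legendre n).natDegree ≤ n := by
  refine (natDegree_smul_le _ _).trans ((natDegree_iterate_derivative _ _).trans ?_)
  rw [natDegree_X_sq_sub_one_pow]
  omega

lemma iterate_derivative_legendre_self (n : ℕ) :
    derivative^[n] (legendre n) = C (((2 * n).factorial : ℝ) / (2 ^ n * n.factorial)) := by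
  rw [legendre, iterate_derivative_smul, ← Function.iterate_add_apply, ← two_mul,
    ← natDegree_X_sq_sub_one_pow (R := ℝ), iterate_derivative_natDegree,
    (monic_X_sq_sub_one.pow n).leadingCoeff, natDegree_X_sq_sub_one_pow, smul_C, smul_eq_mul]
  congr 1
  ring

lemma integral_eval_mul_legendre (p : ℝ[X]) (n : ℕ) :
    ∫ x in (-1:ℝ)..1, p.eval x * (legendre n).eval x =
      (-1) ^ n / (2 ^ n * n.factorial) *
        ∫ x in (-1:ℝ)..1, (derivative^[n] p).eval x * (x ^ 2 - 1) ^ n := by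
  have hroot : ∀ x : ℝ, x ^ 2 = 1 → (X ^ 2 - 1 : ℝ[X]).IsRoot x := fun x hx ↦ by
    simp [hx]
  simp only [legendre, eval_smul, smul_eq_mul, mul_left_comm _ (1 / _ : ℝ),
    intervalIntegral.integral_const_mul]
  rw [integral_eval_mul_iterate_derivative n p _ fun k hk ↦
      ⟨eval_iterate_derivative_pow_eq_zero (hroot _ (by norm_num)) hk,
       eval_iterate_derivative_pow_eq_zero (hroot _ (by norm_num)) hk⟩]
  simp only [eval_pow, eval_sub, eval_X, eval_one]
  ring

lemma integral_legendre_mul_legendre_of_lt {m n : ℕ} (h : m < n) :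
    ∫ x in (-1:ℝ)..1, (legendre m).eval x * (legendre n).eval x = 0 := by
  rw [integral_eval_mul_legendre,
    iterate_derivative_eq_zero ((natDegree_legendre_le m).trans_lt h)]
  simp

lemma integral_legendre_mul_self (n : ℕ) :
    ∫ x in (-1:ℝ)..1, (legendre n).eval x * (legendre n).eval x = 2 / (2 * n + 1) := by
  have hsign : ∀ x : ℝ, (x ^ 2 - 1) ^ n = (-1) ^ n * (1 - x ^ 2) ^ n := fun x ↦ by
    rw [← mul_pow]; ring
  simp only [integral_eval_mul_legendre, iterate_derivative_legendre_self, eval_C, hsign,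
    ← mul_assoc, intervalIntegral.integral_const_mul, integral_one_sub_sq_pow]
  have hfac : ((2 * n + 1).factorial : ℝ) = (2 * n + 1) * (2 * n).factorial := by
    push_cast [Nat.factorial_succ]; ring
  rw [hfac, pow_succ, pow_mul']
  field_simp
  rw [← pow_mul, pow_mul', neg_one_sq, one_pow]

lemma integral_legendre_mul_legendre (m n : ℕ) :
    ∫ x in (-1:ℝ)..1, (legendre m).eval x * (legendre n).eval x =
      (if m = n then 2 else 0 : ℝ) / (2 * n + 1) := by
  rcases lt_trichotomy m n with h | rfl | h
  · rw [integral_legendre_mul_legendre_of_lt h, if_neg h.ne, zero_div]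
  · rw [integral_legendre_mul_self, if_pos rfl]
  · simp_rw [mul_comm (eval _ (legendre m))]
    rw [integral_legendre_mul_legendre_of_lt h, if_neg h.ne', zero_div]

lemma integral_shiftedLegendre_mul_shiftedLegendre (m n : ℕ) :
    ∫ x in (0:ℝ)..1, shiftedLegendre m x * shiftedLegendre n x =
      (if m = n then 1 else 0 : ℝ) / (2 * n + 1) := by
  have h := integral_comp_mul_sub (fun y ↦ (legendre m).eval y * (legendre n).eval y)
    two_ne_zero 1 (a := 0) (b := 1)
  norm_num at h
  rw [show (if m = n then 1 else 0 : ℝ) = 2⁻¹ * (if m = n then 2 else 0) by split_ifs <;> norm_num,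
    mul_div_assoc, ← integral_legendre_mul_legendre, ← one_div]
  exact h

lemma integral_comp_div_one_add_mul_div_sq {c : ℝ} (hc : -1 < c) {f : ℝ → ℝ}
    (hf : Continuous f) :
    ∫ x in (0:ℝ)..1, f ((1 - x) / (1 + c * x)) / (1 + c * x) ^ 2 =
      (∫ u in (0:ℝ)..1, f u) / (1 + c) := by
  have hpos : ∀ x ∈ Set.uIcc (0:ℝ) 1, 0 < 1 + c * x := fun x hx ↦ by
    rw [Set.uIcc_of_le zero_le_one] at hx
    rcases le_or_gt 0 c with h | h <;> nlinarith [hx.1, hx.2]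
  have hderiv : ∀ x ∈ Set.uIcc (0:ℝ) 1,
      HasDerivAt (fun x ↦ (1 - x) / (1 + c * x)) (-(1 + c) / (1 + c * x) ^ 2) x := fun x hx ↦ by
    refine (((hasDerivAt_id' x).const_sub 1).div (((hasDerivAt_id' x).const_mul c).const_add 1)
      (hpos x hx).ne').congr_deriv ?_
    ring
  have hcont : ContinuousOn (fun x ↦ -(1 + c) / (1 + c * x) ^ 2) (Set.uIcc (0:ℝ) 1) :=
    continuousOn_const.div (by fun_prop) fun x hx ↦ (pow_pos (hpos x hx) 2).ne'
  have hsub := integral_comp_mul_deriv hderiv hcont hf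
  norm_num [Function.comp_def] at hsub
  have hc' : (1 + c) ≠ 0 := by linarith
  calc ∫ x in (0:ℝ)..1, f ((1 - x) / (1 + c * x)) / (1 + c * x) ^ 2
      = ∫ x in (0:ℝ)..1,
          f ((1 - x) / (1 + c * x)) * ((-c + -1) / (1 + c * x) ^ 2) * -(1 + c)⁻¹ :=
        integral_congr fun x _ ↦ by field_simp; ring
    _ = (∫ u in (0:ℝ)..1, f u) / (1 + c) := by
        rw [intervalIntegral.integral_mul_const, hsub, integral_symm]
        ring

lemma continuous_shiftedLegendre (n : ℕ) : Continuous (shiftedLegendre n) :=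
  (legendre n).continuous.comp (by fun_prop)

lemma legendreRationalC_eq (n : ℕ) {c x : ℝ} (hc : c ≠ 0) (hc1 : c + 1 ≠ 0)
    (hx : 1 + c * x ≠ 0) :
    legendreRationalC c n x =
      (-1) ^ (n - 1) * shiftedLegendre (n - 1) ((1 - x) / (1 + c * x)) / (1 + c * x) := by
  have hα : c / (c + 1) * ((1 - x) / (1 + c * x) + 1 / c) = 1 / (1 + c * x) := by
    field_simp
    ring
  rw [legendreRationalC, alteredLegendreC, hα]
  ring

/-- Orthogonality of the parametric Legendre rational functions:
`∫₀¹ R_m(c;x) R_n(c;x) dx = δ_{mn}/((1+c)(2n-1))`. -/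
theorem legendreRationalC_orthogonality (c : ℝ) (hc : 0 < c) (m n : ℕ) (hm : 1 ≤ m)
    (hn : 1 ≤ n) :
    ∫ x in (0:ℝ)..1, legendreRationalC c m x * legendreRationalC c n x =
      (if m = n then 1 else 0) / ((1 + c) * (2 * (n : ℝ) - 1)) := by
  have hx : ∀ x ∈ Set.uIcc (0:ℝ) 1, 1 + c * x ≠ 0 := fun x hx ↦ by
    rw [Set.uIcc_of_le zero_le_one] at hx
    nlinarith [hx.1]
  calc ∫ x in (0:ℝ)..1, legendreRationalC c m x * legendreRationalC c n x
      = ∫ x in (0:ℝ)..1, (-1) ^ (m - 1 + (n - 1)) * ((fun u ↦ shiftedLegendre (m - 1) u *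
          shiftedLegendre (n - 1) u) ((1 - x) / (1 + c * x)) / (1 + c * x) ^ 2) :=
        integral_congr fun x hx' ↦ by
          rw [legendreRationalC_eq m hc.ne' (by positivity) (hx x hx'),
            legendreRationalC_eq n hc.ne' (by positivity) (hx x hx'), pow_add]
          field_simp
    _ = (-1) ^ (m - 1 + (n - 1)) *
          ((if m - 1 = n - 1 then 1 else 0) / (2 * (n - 1 : ℕ) + 1) / (1 + c)) := by
        rw [intervalIntegral.integral_const_mul, integral_comp_div_one_add_mul_div_sq (by linarith)
          (f := fun u ↦ shiftedLegendre (m - 1) u * shiftedLegendre (n - 1) u)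
          ((continuous_shiftedLegendre _).mul (continuous_shiftedLegendre _)),
          integral_shiftedLegendre_mul_shiftedLegendre]
    _ = (if m = n then 1 else 0) / ((1 + c) * (2 * (n : ℝ) - 1)) := by
        rcases eq_or_ne m n with rfl | hmn
        · rw [if_pos rfl, if_pos rfl, ← two_mul, pow_mul, neg_one_sq, one_pow, Nat.cast_sub hn]
          push_cast
          rw [one_mul, div_div, mul_comm (1 + c)]
          ring
        · rw [if_neg (by omega), if_neg hmn]
          simp
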